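/- arXiv:2603.19007 — 6 statements merged into one kernel-verified Lean document; each statement's English description precedes it below -/
import Mathlib

section
/- Let n ≥ 1 and let p be a polynomial of degree d with complex coefficients. Consider the vector of amplitudes on n-bit strings whose value at (s_1,…,s_n) ∈ {0,1}^n is p(k(s)), where k(s) = −s_1·2^{n−1} + ∑_{j=2}^{n} s_j·2^{n−j} is the integer encoded by the string in two's-complement representation (so k(s) ranges over the grid [−2^{n−1}, 2^{n−1}−1] ∩ ℤ). Then this vector admits an exact matrix-product-state representation with bond dimension at most 2d+4: there exist natural numbers m_0 = 1, m_1, …, m_{n−1}, m_n = 1 with every m_i ≤ 2d+4, and complex matrices A_i^{(s)} of size m_{i−1} × m_i for each 1 ≤ i ≤ n and s ∈ {0,1}, such that for every bit string (s_1,…,s_n) the 1×1 matrix product A_1^{(s_1)} A_2^{(s_2)} ⋯ A_n^{(s_n)} equals p(k(s)). -/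
/-- Left-to-right contraction of a chain of matrices `A 0, A 1, …` with bond dimensions
`m 0, m 1, …`: the result after `k` steps is the row vector
`(1,…,1) ᵥ* A 0 ᵥ* ⋯ ᵥ* A (k-1)` (with `m 0 = 1` this is the usual MPS contraction). -/
noncomputable def mpsContract (m : ℕ → ℕ)
    (A : (i : ℕ) → Matrix (Fin (m i)) (Fin (m (i + 1))) ℂ) :
    (k : ℕ) → Fin (m k) → ℂ
  | 0 => fun _ => 1
  | (k + 1) => Matrix.vecMul (mpsContract m A k) (A k)

/-!
Write the value as `p (w₀ + ⋯ + w_{n-1})` with local terms `wᵢ` depending on the `i`-th bit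
only. After `k` sites the contraction carries the monomials `1, T, …, T^d` of the partial sum
`T = w₀ + ⋯ + w_{k-1}`; a site acts on them by the binomial matrix of the translation
`T ↦ T + wₖ`, and the last site pairs them with the coefficients of `p`. This gives bond
dimension `d + 1 ≤ 2d + 4`.
-/

open Finset Polynomial

section BinomialShift

variable {R : Type*} [CommSemiring R]

/-- The matrix of `q(X) ↦ q(X + c)` on the monomial basis. -/
def binomShift (c : R) (a b : ℕ) : R := (b.choose a : R) * c ^ (b - a)

lemma sum_range_pow_mul_binomShift {r b : ℕ} (t c : R) (hr : 0 < r) (h : t = 0 ∨ b < r) :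
    ∑ a ∈ range r, t ^ a * binomShift c a b = (t + c) ^ b := by
  rcases h with rfl | hb
  · rw [sum_eq_single_of_mem 0 (mem_range.mpr hr) fun a _ ha => by simp [ha]]
    simp [binomShift]
  · rw [← sum_subset (range_subset_range.mpr hb) fun a _ ha => by
      simp [binomShift, Nat.choose_eq_zero_of_lt (by simpa using ha : b < a)]]
    rw [add_pow]
    exact sum_congr rfl fun a _ => by simp only [binomShift]; ring

lemma sum_range_pow_mul_sum_coeff_mul_binomShift (p : R[X]) {r N : ℕ} (t c : R)
    (hN : p.natDegree < N) (hr : 0 < r) (h : t = 0 ∨ N ≤ r) :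
    ∑ a ∈ range r, t ^ a * ∑ j ∈ range N, p.coeff j * binomShift c a j =
      p.eval (t + c) := by
  simp_rw [mul_sum, mul_left_comm _ (p.coeff _)]
  rw [sum_comm, eval_eq_sum_range' hN]
  refine sum_congr rfl fun j hj => ?_
  rw [← mul_sum, sum_range_pow_mul_binomShift t c hr ?_]
  exact h.imp_right fun hN => (mem_range.mp hj).trans_le hN

end BinomialShift

section PolynomialOfLocalSum

variable {σ : Type*} (n d : ℕ) (p : ℂ[X]) (w : ℕ → σ → ℂ)

def polyBond (i : ℕ) : ℕ := if i = 0 ∨ n ≤ i then 1 else d + 1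

lemma polyBond_le (i : ℕ) : polyBond n d i ≤ d + 1 := by
  unfold polyBond; split <;> omega

lemma polyBond_pos (i : ℕ) : 0 < polyBond n d i := by
  unfold polyBond; split <;> omega

lemma polyBond_of_pos_of_lt {i : ℕ} (h0 : 0 < i) (hn : i < n) : polyBond n d i = d + 1 := by
  unfold polyBond; rw [if_neg (by omega)]

def polySumSite (i : ℕ) (x : σ) :
    Matrix (Fin (polyBond n d i)) (Fin (polyBond n d (i + 1))) ℂ :=
  Matrix.of fun a b =>
    if i + 1 = n then ∑ j ∈ range (d + 1), p.coeff j * binomShift (w i x) a j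
    else binomShift (w i x) a b

variable (s : ℕ → σ)

local notation "contract" =>
  mpsContract (polyBond n d) (fun i => polySumSite n d p w i (s i))

lemma mpsContract_polySumSite_of_lt {k : ℕ} (hk : k < n) (b : Fin (polyBond n d k)) :
    contract k b = (∑ i ∈ range k, w i (s i)) ^ (b : ℕ) := by
  induction k with
  | zero =>
    have hb : (b : ℕ) = 0 := by have := b.isLt; simp [polyBond] at this; omega
    simp [mpsContract, hb]
  | succ k ih =>
    have hA : ∀ a b, polySumSite n d p w k (s k) a b = binomShift (w k (s k)) a b := by
      intro a b; simp [polySumSite, show k + 1 ≠ n by omega]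
    have hb : (b : ℕ) < d + 1 := polyBond_of_pos_of_lt n d k.succ_pos hk ▸ b.isLt
    simp only [mpsContract, Matrix.vecMul, dotProduct, hA, ih (by omega : k < n)]
    rw [Fin.sum_univ_eq_sum_range (fun a => _ ^ a * binomShift (w k (s k)) a b),
      sum_range_pow_mul_binomShift _ _ (polyBond_pos n d k), sum_range_succ]
    rcases k.eq_zero_or_pos with rfl | hk0
    · simp
    · rw [polyBond_of_pos_of_lt n d hk0 (by omega)]; exact Or.inr hb

lemma mpsContract_polySumSite (hn : 1 ≤ n) (hp : p.natDegree ≤ d)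
    (b : Fin (polyBond n d n)) : contract n b = p.eval (∑ i ∈ range n, w i (s i)) := by
  obtain ⟨k, rfl⟩ : ∃ k, n = k + 1 := ⟨n - 1, by omega⟩
  have hA : ∀ a b, polySumSite (k + 1) d p w k (s k) a b =
      ∑ j ∈ range (d + 1), p.coeff j * binomShift (w k (s k)) a j := by
    intro a b; simp [polySumSite]
  simp only [mpsContract, Matrix.vecMul, dotProduct, hA,
    mpsContract_polySumSite_of_lt (k + 1) d p w s k.lt_succ_self]
  rw [Fin.sum_univ_eq_sum_range
      (fun a => _ ^ a * ∑ j ∈ range (d + 1), p.coeff j * binomShift _ a j),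
    sum_range_pow_mul_sum_coeff_mul_binomShift p _ _ (by omega) (polyBond_pos _ d k),
    sum_range_succ]
  rcases k.eq_zero_or_pos with rfl | hk0
  · simp
  · rw [polyBond_of_pos_of_lt _ d hk0 (by omega)]; exact Or.inr le_rfl

end PolynomialOfLocalSum

def twosComplementWeight (n i : ℕ) : ℤ := if i = 0 then -2 ^ (n - 1) else 2 ^ (n - 1 - i)

lemma sum_range_twosComplementWeight_mul {n : ℕ} (hn : 1 ≤ n) (x : ℕ → ℤ) :
    ∑ i ∈ range n, twosComplementWeight n i * x i =
      -2 ^ (n - 1) * x 0 + ∑ i ∈ Ico 1 n, 2 ^ (n - 1 - i) * x i := by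
  rw [range_eq_Ico, sum_eq_sum_Ico_succ_bot hn]
  congr 1
  exact sum_congr rfl fun i hi => by
    rw [twosComplementWeight, if_neg (by simp at hi; omega)]

/-- A degree-`d` polynomial evaluated on the two's-complement grid of `n`-bit strings admits
an exact matrix-product-state representation with bond dimension at most `2d + 4`. -/
theorem stmt2 (n d : ℕ) (hn : 1 ≤ n) (p : Polynomial ℂ) (hd : p.natDegree = d) :
    ∃ (m : ℕ → ℕ) (A : (i : ℕ) → Fin 2 → Matrix (Fin (m i)) (Fin (m (i + 1))) ℂ),
      m 0 = 1 ∧ m n = 1 ∧ (∀ i ≤ n, m i ≤ 2 * d + 4) ∧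
      ∀ s : ℕ → Fin 2, ∀ j : Fin (m n),
        mpsContract m (fun i => A i (s i)) n j =
          p.eval (((-(2 : ℤ) ^ (n - 1) * ((s 0 : ℕ) : ℤ) +
            ∑ i ∈ Finset.Ico 1 n, (2 : ℤ) ^ (n - 1 - i) * ((s i : ℕ) : ℤ) : ℤ) : ℂ)) := by
  let w : ℕ → Fin 2 → ℂ := fun i x => ((twosComplementWeight n i * (x : ℕ) : ℤ) : ℂ)
  refine ⟨polyBond n d, polySumSite n d p w, by simp [polyBond], by simp [polyBond],
    fun i _ => (polyBond_le n d i).trans (by omega), fun s j => ?_⟩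
  rw [mpsContract_polySumSite n d p w s hn hd.le,
    ← sum_range_twosComplementWeight_mul hn fun i => ((s i : ℕ) : ℤ), Int.cast_sum]
end

section
/- Let d ≥ 1, let Λ be a real symmetric positive-definite d×d matrix with largest eigenvalue λ_max(Λ), and let ψ : ℤ^d → ℝ be the normalized discrete Gaussian ψ(n) = exp(−(1/2) nᵀΛn) / ( ∑_{m∈ℤ^d} exp(−mᵀΛm) )^{1/2}. Then for every c ∈ ℤ^d with each coordinate c_i ∈ {−2, 0, 2}, the trace distance between ψ and its shift ψ(·+c) satisfies √( 1 − | ∑_{n∈ℤ^d} ψ(n) ψ(n+c) |² ) ≤ √2 · ( 1 − exp(−d·λ_max(Λ)) )^{1/2}. -/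
/-!
Write `c = 2h` with `hᵢ ∈ {-1, 0, 1}`. The parallelogram law gives
`Q(n) + Q(n + 2h) = 2 Q(n + h) + 2 Q(h)`, so `ψ(n) ψ(n + c) = exp(-Q(h)) ψ(n + h)²`; after
shifting the summation index the overlap is exactly `exp(-Q(h))`. The Rayleigh bound gives
`Q(h) ≤ |h|² λ_max ≤ d λ_max`, and `1 - x² ≤ 2 (1 - x)` finishes.
-/

open Matrix Real

namespace Matrix

variable {n : Type*} [Fintype n]

lemma dotProduct_mulVec_parallelogram {R : Type*} [CommRing R] (A : Matrix n n R) (b v : n → R) :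
    (b - v) ⬝ᵥ A *ᵥ (b - v) + (b + v) ⬝ᵥ A *ᵥ (b + v) =
      2 * (b ⬝ᵥ A *ᵥ b) + 2 * (v ⬝ᵥ A *ᵥ v) := by
  simp only [mulVec_add, mulVec_sub, add_dotProduct, sub_dotProduct, dotProduct_add,
    dotProduct_sub]
  ring

variable [DecidableEq n] {A : Matrix n n ℝ}

lemma IsHermitian.exists_dotProduct_mulVec_eq_sum_eigenvalues_mul_sq (hA : A.IsHermitian)
    (x : n → ℝ) :
    ∃ y : n → ℝ, x ⬝ᵥ A *ᵥ x = ∑ i, hA.eigenvalues i * y i ^ 2 ∧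
      ∑ i, y i ^ 2 = ∑ i, x i ^ 2 := by
  set U : Matrix n n ℝ := (hA.eigenvectorUnitary : Matrix n n ℝ)
  have hdiag : star U * A * U = diagonal hA.eigenvalues := by
    simpa using hA.conjStarAlgAut_star_eigenvectorUnitary
  have hUx : x = U *ᵥ (star U *ᵥ x) := by
    rw [mulVec_mulVec, mem_unitaryGroup_iff.mp hA.eigenvectorUnitary.2, one_mulVec]
  have hconj (M : Matrix n n ℝ) (y : n → ℝ) :
      (U *ᵥ y) ⬝ᵥ M *ᵥ (U *ᵥ y) = y ⬝ᵥ (star U * M * U) *ᵥ y := by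
    rw [dotProduct_mulVec, vecMul_mulVec, dotProduct_mulVec, ← mulVec_mulVec, dotProduct_mulVec,
      star_eq_conjTranspose, conjTranspose_eq_transpose_of_trivial, dotProduct_mulVec]
  refine ⟨star U *ᵥ x, ?_, ?_⟩
  · rw [hUx, hconj, hdiag, ← hUx]
    simp only [dotProduct, mulVec_diagonal, sq]
    exact Finset.sum_congr rfl fun i _ => by ring
  · have := hconj 1 (star U *ᵥ x)
    rw [← hUx, mul_one, mem_unitaryGroup_iff'.mp hA.eigenvectorUnitary.2, one_mulVec,
      one_mulVec] at this
    simpa only [dotProduct, sq] using this.symm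

lemma IsHermitian.mul_sum_sq_le_dotProduct_mulVec (hA : A.IsHermitian) {ε : ℝ}
    (hε : ∀ i, ε ≤ hA.eigenvalues i) (x : n → ℝ) : ε * ∑ i, x i ^ 2 ≤ x ⬝ᵥ A *ᵥ x := by
  obtain ⟨y, hxy, hy⟩ := hA.exists_dotProduct_mulVec_eq_sum_eigenvalues_mul_sq x
  rw [hxy, ← hy, Finset.mul_sum]
  gcongr with i
  exact hε i

lemma IsHermitian.dotProduct_mulVec_le_mul_sum_sq (hA : A.IsHermitian) {L : ℝ}
    (hL : ∀ i, hA.eigenvalues i ≤ L) (x : n → ℝ) : x ⬝ᵥ A *ᵥ x ≤ L * ∑ i, x i ^ 2 := by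
  obtain ⟨y, hxy, hy⟩ := hA.exists_dotProduct_mulVec_eq_sum_eigenvalues_mul_sq x
  rw [hxy, ← hy, Finset.mul_sum]
  gcongr with i
  exact hL i

lemma PosSemidef.dotProduct_mulVec_le_card_mul_iSup_eigenvalues (hA : A.PosSemidef)
    {x : n → ℝ} (hx : ∀ i, x i ^ 2 ≤ 1) :
    x ⬝ᵥ A *ᵥ x ≤ Fintype.card n * ⨆ i, hA.isHermitian.eigenvalues i := by
  have hL : ∀ i, hA.isHermitian.eigenvalues i ≤ ⨆ i, hA.isHermitian.eigenvalues i :=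
    le_ciSup (Set.finite_range _).bddAbove
  calc x ⬝ᵥ A *ᵥ x ≤ (⨆ i, hA.isHermitian.eigenvalues i) * ∑ i, x i ^ 2 :=
        hA.isHermitian.dotProduct_mulVec_le_mul_sum_sq hL x
    _ ≤ (⨆ i, hA.isHermitian.eigenvalues i) * Fintype.card n := by
        gcongr
        · exact Real.iSup_nonneg hA.eigenvalues_nonneg
        · calc ∑ i, x i ^ 2 ≤ ∑ _i : n, (1 : ℝ) := Finset.sum_le_sum fun i _ => hx i
            _ = Fintype.card n := by simp
    _ = _ := mul_comm _ _

lemma PosDef.exists_pos_mul_sum_sq_le_dotProduct_mulVec (hA : A.PosDef) :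
    ∃ ε > 0, ∀ x : n → ℝ, ε * ∑ i, x i ^ 2 ≤ x ⬝ᵥ A *ᵥ x := by
  rcases isEmpty_or_nonempty n with hn | hn
  · exact ⟨1, one_pos, fun x => by simp⟩
  · obtain ⟨j, hj⟩ := Finite.exists_min hA.isHermitian.eigenvalues
    exact ⟨_, hA.eigenvalues_pos j, hA.isHermitian.mul_sum_sq_le_dotProduct_mulVec hj⟩

end Matrix

lemma summable_exp_neg_mul_int_sq {ε : ℝ} (hε : 0 < ε) :
    Summable fun m : ℤ => exp (-(ε * m ^ 2)) := by
  -- the Jacobi theta term at `z = 0`, `τ = iε/π` has norm `exp(-ε m²)`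
  have := ((summable_jacobiTheta₂_term_iff 0 (ε / π * Complex.I)).mpr
    (by simpa using div_pos hε pi_pos)).norm
  convert this using 2 with m
  rw [norm_jacobiTheta₂_term]
  congr 1
  simp [field]

lemma summable_fin_pi_prod_of_nonneg {α : Type*} {f : α → ℝ} (hf : Summable f) (h0 : 0 ≤ f)
    (d : ℕ) : Summable fun x : Fin d → α => ∏ i, f (x i) := by
  induction d with
  | zero => exact Summable.of_finite
  | succ d ih =>
    have := (Fin.consEquiv fun _ : Fin (d + 1) => α).symm.summable_iff.mpr
      (hf.mul_of_nonneg ih h0 fun x => Finset.prod_nonneg fun i _ => h0 _)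
    convert this using 2 with x
    simp [Fin.prod_univ_succ, Fin.consEquiv, Fin.tail]

lemma Matrix.PosDef.summable_exp_neg_dotProduct_mulVec_int {d : ℕ}
    {A : Matrix (Fin d) (Fin d) ℝ} (hA : A.PosDef) :
    Summable fun m : Fin d → ℤ => exp (-((fun i => (m i : ℝ)) ⬝ᵥ A *ᵥ fun i => (m i : ℝ))) := by
  obtain ⟨ε, hε, hA_ge⟩ := hA.exists_pos_mul_sum_sq_le_dotProduct_mulVec
  refine (summable_fin_pi_prod_of_nonneg (summable_exp_neg_mul_int_sq hε)
    (fun _ => (exp_pos _).le) d).of_nonneg_of_le (fun _ => (exp_pos _).le) fun m => ?_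
  rw [← exp_sum, Finset.sum_neg_distrib, ← Finset.mul_sum]
  exact exp_le_exp.mpr (neg_le_neg (hA_ge _))

lemma tsum_exp_neg_half_mul_exp_neg_half_add_two_smul {n : Type*} {Q : (n → ℝ) → ℝ}
    (hQ : ∀ b v, Q (b - v) + Q (b + v) = 2 * Q b + 2 * Q v) (h : n → ℤ) :
    ∑' m : n → ℤ,
        exp (-Q (fun i => (m i : ℝ)) / 2) * exp (-Q (fun i => ((m + 2 • h) i : ℝ)) / 2) =
      exp (-Q (fun i => (h i : ℝ))) * ∑' m : n → ℤ, exp (-Q (fun i => (m i : ℝ))) := by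
  have hterm (m : n → ℤ) :
      exp (-Q (fun i => (m i : ℝ)) / 2) * exp (-Q (fun i => ((m + 2 • h) i : ℝ)) / 2) =
        exp (-Q (fun i => (h i : ℝ))) * exp (-Q (fun i => ((m + h) i : ℝ))) := by
    have hpar := hQ (fun i => ((m + h) i : ℝ)) (fun i => (h i : ℝ))
    have hsub : (fun i => ((m + h) i : ℝ)) - (fun i => (h i : ℝ)) = fun i => (m i : ℝ) := by
      ext i; simp
    have hadd : (fun i => ((m + h) i : ℝ)) + (fun i => (h i : ℝ)) =
        fun i => ((m + 2 • h) i : ℝ) := by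
      ext i; simp only [two_nsmul, Pi.add_apply, Int.cast_add]; ring
    rw [hsub, hadd] at hpar
    rw [← exp_add, ← exp_add]
    congr 1
    linarith
  rw [tsum_congr hterm, tsum_mul_left]
  congr 1
  exact (Equiv.addRight h).tsum_eq fun m => exp (-Q (fun i => (m i : ℝ)))

lemma exists_eq_two_smul_of_forall_mem {ι : Type*} {c : ι → ℤ}
    (hc : ∀ i, c i = -2 ∨ c i = 0 ∨ c i = 2) : ∃ h : ι → ℤ, c = 2 • h ∧ ∀ i, h i ^ 2 ≤ 1 := by
  refine ⟨fun i => c i / 2, funext fun i => ?_, fun i => ?_⟩ <;>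
    rcases hc i with hi | hi | hi <;> simp [hi]

theorem stmt3_general (d : ℕ) (Λ : Matrix (Fin d) (Fin d) ℝ)
    (hpd : Λ.PosDef)
    (Q : (Fin d → ℝ) → ℝ)
    (hQ : ∀ x, Q x = dotProduct x (Λ.mulVec x))
    (ψ : (Fin d → ℤ) → ℝ)
    (hψ : ∀ n : Fin d → ℤ, ψ n = Real.exp (-Q (fun i => (n i : ℝ)) / 2) /
        Real.sqrt (∑' m : Fin d → ℤ, Real.exp (-Q (fun i => (m i : ℝ)))))
    (c : Fin d → ℤ) (hc : ∀ i, c i = -2 ∨ c i = 0 ∨ c i = 2) :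
    Real.sqrt (1 - |∑' n : Fin d → ℤ, ψ n * ψ (n + c)| ^ 2) ≤
      Real.sqrt 2 *
        Real.sqrt (1 - Real.exp (-((d : ℝ) * ⨆ i, hpd.isHermitian.eigenvalues i))) := by
  obtain ⟨h, rfl, hh⟩ := exists_eq_two_smul_of_forall_mem hc
  have hT : 0 < ∑' m : Fin d → ℤ, exp (-Q (fun i => (m i : ℝ))) := by
    simp only [hQ]
    exact hpd.summable_exp_neg_dotProduct_mulVec_int.tsum_pos (fun _ => (exp_pos _).le) 0
      (exp_pos _)
  have hpar : ∀ b v, Q (b - v) + Q (b + v) = 2 * Q b + 2 * Q v := by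
    simpa only [hQ] using dotProduct_mulVec_parallelogram Λ
  have hoverlap : ∑' n, ψ n * ψ (n + 2 • h) = exp (-Q fun i => (h i : ℝ)) := by
    simp_rw [hψ, div_mul_div_comm, mul_self_sqrt hT.le, tsum_div_const,
      tsum_exp_neg_half_mul_exp_neg_half_add_two_smul hpar h, mul_div_assoc, div_self hT.ne',
      mul_one]
  have hQh : Q (fun i => (h i : ℝ)) ≤ d * ⨆ i, hpd.isHermitian.eigenvalues i := by
    have hh' : ∀ i, (h i : ℝ) ^ 2 ≤ 1 := fun i => by exact_mod_cast hh i
    simpa [hQ] using hpd.posSemidef.dotProduct_mulVec_le_card_mul_iSup_eigenvalues hh'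
  rw [hoverlap, abs_of_pos (exp_pos _), ← sqrt_mul zero_le_two]
  gcongr
  nlinarith [sq_nonneg (1 - exp (-Q fun i => (h i : ℝ))), exp_le_exp.mpr (neg_le_neg hQh)]

/-- Shearing-error bound for a normalized discrete Gaussian on `ℤ^d`: for any shift `c`
with coordinates in `{-2, 0, 2}`, the trace distance between the Gaussian and its shift is
at most `√2 · (1 - exp(-d·λ_max(Λ)))^{1/2}`. -/
theorem stmt3 (d : ℕ) (hd : 1 ≤ d) (Λ : Matrix (Fin d) (Fin d) ℝ)
    (hsymm : Λ.IsSymm) (hpd : Λ.PosDef)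
    (Q : (Fin d → ℝ) → ℝ)
    (hQ : ∀ x, Q x = dotProduct x (Λ.mulVec x))
    (ψ : (Fin d → ℤ) → ℝ)
    (hψ : ∀ n : Fin d → ℤ, ψ n = Real.exp (-Q (fun i => (n i : ℝ)) / 2) /
        Real.sqrt (∑' m : Fin d → ℤ, Real.exp (-Q (fun i => (m i : ℝ)))))
    (c : Fin d → ℤ) (hc : ∀ i, c i = -2 ∨ c i = 0 ∨ c i = 2) :
    Real.sqrt (1 - |∑' n : Fin d → ℤ, ψ n * ψ (n + c)| ^ 2) ≤
      Real.sqrt 2 *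
        Real.sqrt (1 - Real.exp (-((d : ℝ) * ⨆ i, hpd.isHermitian.eigenvalues i))) :=
  stmt3_general d Λ hpd Q hQ ψ hψ c hc
end

section
/- Let d ≥ 1, let Λ be a real symmetric positive-definite d×d matrix, and let ψ : ℤ^d → ℝ be the normalized discrete Gaussian ψ(n) = exp(−(1/2) nᵀΛn) / ( ∑_{m∈ℤ^d} exp(−mᵀΛm) )^{1/2}. Then for every index k ∈ {1,…,d} and for c = ±2e_k (twice a standard basis vector), the trace distance between ψ and its shift ψ(·+c) satisfies √( 1 − | ∑_{n∈ℤ^d} ψ(n) ψ(n+c) |² ) ≤ √2 · ( 1 − exp(−Λ_{kk}) )^{1/2}, where Λ_{kk} is the k-th diagonal entry of Λ. -/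
/-!
By the parallelogram law `Q(n) + Q(n + 2b) = 2 Q(n + b) + 2 Q(b)`, the overlap of the normalized
Gaussian with its shift by `2b` is exactly `exp (-Q(b))`, which is `exp (-Λ_kk)` for `b = ±e_k`;
the bound then reduces to `1 - x² ≤ 2 (1 - x)`. Positive definiteness is needed only to make
`∑ exp (-Q)` converge: by compactness of the unit sphere `Q(x) ≥ μ |x|²` for some `μ > 0`, and the
Gaussian `exp (-μ |n|²)` is a product of one-dimensional summable Gaussians.
-/

open Real Matrix

theorem exists_pos_mul_norm_sq_le {E : Type*} [NormedAddCommGroup E] [NormedSpace ℝ E]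
    [FiniteDimensional ℝ E] {f : E → ℝ} (hf : Continuous f)
    (hsmul : ∀ (t : ℝ) (x : E), f (t • x) = t ^ 2 * f x) (hpos : ∀ x ≠ 0, 0 < f x) :
    ∃ μ, 0 < μ ∧ ∀ x, μ * ‖x‖ ^ 2 ≤ f x := by
  obtain ⟨μ, hμ, hμf⟩ := (isCompact_sphere (0 : E) 1).exists_forall_le' hf.continuousOn
    fun u hu => hpos u (ne_zero_of_mem_unit_sphere ⟨u, hu⟩)
  refine ⟨μ, hμ, fun x => ?_⟩
  rcases eq_or_ne x 0 with rfl | hx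
  · have h0 : f 0 = 0 := by simpa using hsmul 0 0
    simp [h0]
  have hu : ‖x‖⁻¹ • x ∈ Metric.sphere (0 : E) 1 := by
    simp [norm_smul, inv_mul_cancel₀ (norm_ne_zero_iff.2 hx)]
  calc μ * ‖x‖ ^ 2 ≤ f (‖x‖⁻¹ • x) * ‖x‖ ^ 2 := by gcongr; exact hμf _ hu
    _ = f x := by
      rw [hsmul, inv_pow, mul_comm, ← mul_assoc, mul_inv_cancel₀ (by positivity), one_mul]

theorem Matrix.PosDef.exists_pos_mul_sum_sq_le {ι : Type*} [Fintype ι]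
    {Λ : Matrix ι ι ℝ} (hΛ : Λ.PosDef) :
    ∃ μ, 0 < μ ∧ ∀ x : ι → ℝ, μ * ∑ i, x i ^ 2 ≤ x ⬝ᵥ Λ *ᵥ x := by
  obtain ⟨μ, hμ, h⟩ := exists_pos_mul_norm_sq_le
    (f := fun y : EuclideanSpace ℝ ι => y.ofLp ⬝ᵥ Λ *ᵥ y.ofLp)
    (by fun_prop)
    (fun t y => by
      simp only [WithLp.ofLp_smul, mulVec_smul, dotProduct_smul, smul_dotProduct, smul_eq_mul]
      ring)
    (fun y hy => by simpa using hΛ.dotProduct_mulVec_pos (x := y.ofLp) (by simpa using hy))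
  exact ⟨μ, hμ, fun x => by simpa [EuclideanSpace.real_norm_sq_eq] using h (WithLp.toLp 2 x)⟩

theorem summable_prod_apply_of_nonneg {ι α : Type*} [Fintype ι] {f : α → ℝ}
    (hf0 : ∀ a, 0 ≤ f a) (hf : Summable f) : Summable fun n : ι → α => ∏ i, f (n i) := by
  classical
  refine summable_of_sum_le (c := ∏ _i : ι, ∑' a, f a)
    (fun n => Finset.prod_nonneg fun i _ => hf0 _) fun s => ?_
  calc ∑ n ∈ s, ∏ i, f (n i)
      ≤ ∑ n ∈ Fintype.piFinset fun i => s.image (· i), ∏ i, f (n i) :=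
        Finset.sum_le_sum_of_subset_of_nonneg
          (fun n hn => Fintype.mem_piFinset.2 fun i => Finset.mem_image_of_mem _ hn)
          fun n _ _ => Finset.prod_nonneg fun i _ => hf0 _
    _ = ∏ i, ∑ a ∈ s.image (· i), f a := (Finset.prod_univ_sum _ _).symm
    _ ≤ ∏ _i : ι, ∑' a, f a :=
        Finset.prod_le_prod (fun i _ => Finset.sum_nonneg fun a _ => hf0 a)
          fun i _ => hf.sum_le_tsum _ fun a _ => hf0 a

theorem summable_exp_neg_mul_sq {μ : ℝ} (hμ : 0 < μ) :
    Summable fun n : ℤ => exp (-(μ * (n : ℝ) ^ 2)) := by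
  convert summable_pow_mul_jacobiTheta₂_term_bound 0 (div_pos hμ pi_pos) 0 using 2 with n
  field_simp
  ring_nf

theorem summable_exp_neg_mul_sum_sq {ι : Type*} [Fintype ι] {μ : ℝ} (hμ : 0 < μ) :
    Summable fun n : ι → ℤ => exp (-(μ * ∑ i, (n i : ℝ) ^ 2)) := by
  refine (summable_prod_apply_of_nonneg (ι := ι) (fun _ => (exp_pos _).le)
    (summable_exp_neg_mul_sq hμ)).congr fun n => ?_
  rw [Finset.mul_sum, ← Finset.sum_neg_distrib, exp_sum]

theorem Matrix.PosDef.summable_exp_neg_dotProduct_mulVec {ι : Type*} [Fintype ι]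
    {Λ : Matrix ι ι ℝ} (hΛ : Λ.PosDef) :
    Summable fun n : ι → ℤ =>
      exp (-((fun i => (n i : ℝ)) ⬝ᵥ Λ *ᵥ fun i => (n i : ℝ))) := by
  obtain ⟨μ, hμ, hle⟩ := hΛ.exists_pos_mul_sum_sq_le
  exact (summable_exp_neg_mul_sum_sq hμ).of_nonneg_of_le (fun _ => (exp_pos _).le)
    fun n => exp_le_exp.2 (neg_le_neg (hle _))

theorem Matrix.parallelogram_law_dotProduct_mulVec {R n : Type*} [CommRing R] [Fintype n]
    (A : Matrix n n R) (x y : n → R) :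
    (x + y) ⬝ᵥ A *ᵥ (x + y) + (x - y) ⬝ᵥ A *ᵥ (x - y) =
      2 * (x ⬝ᵥ A *ᵥ x) + 2 * (y ⬝ᵥ A *ᵥ y) := by
  simp only [mulVec_add, mulVec_sub, dotProduct_add, dotProduct_sub, add_dotProduct,
    sub_dotProduct]
  ring

theorem Matrix.single_dotProduct_mulVec_single {R n : Type*} [CommRing R] [Fintype n]
    [DecidableEq n] (A : Matrix n n R) (k : n) (s : R) :
    Pi.single k s ⬝ᵥ A *ᵥ Pi.single k s = s ^ 2 * A k k := by
  simp only [mulVec_single, single_dotProduct, Pi.smul_apply, col_apply,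
    MulOpposite.smul_eq_mul_unop, MulOpposite.unop_op]
  ring

noncomputable def normalizedGaussian {G : Type*} (q : G → ℝ) (n : G) : ℝ :=
  exp (-q n / 2) / √(∑' m, exp (-q m))

theorem tsum_normalizedGaussian_mul_add_add {G : Type*} [AddCommGroup G] {q : G → ℝ}
    (hq : ∀ x y, q (x + y) + q (x - y) = 2 * q x + 2 * q y)
    (hs : Summable fun n => exp (-q n)) (b : G) :
    ∑' n, normalizedGaussian q n * normalizedGaussian q (n + (b + b)) = exp (-q b) := by
  set S := ∑' m, exp (-q m)
  have hS : 0 < S := hs.tsum_pos (fun _ => (exp_pos _).le) 0 (exp_pos _)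
  have hterm : ∀ n, normalizedGaussian q n * normalizedGaussian q (n + (b + b)) =
      exp (-q b) / S * exp (-q (n + b)) := by
    intro n
    have hpar : q (n + (b + b)) + q n = 2 * q (n + b) + 2 * q b := by
      simpa [add_assoc] using hq (n + b) b
    rw [normalizedGaussian, normalizedGaussian, div_mul_div_comm, ← exp_add,
      mul_self_sqrt hS.le, div_mul_eq_mul_div, ← exp_add]
    congr 2
    linarith
  have hshift : ∑' n, exp (-q (n + b)) = S := (Equiv.addRight b).tsum_eq fun m => exp (-q m)
  rw [tsum_congr hterm, tsum_mul_left, hshift, div_mul_cancel₀ _ hS.ne']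

theorem sqrt_one_sub_sq_abs_le (x : ℝ) : √(1 - |x| ^ 2) ≤ √2 * √(1 - x) := by
  rw [← sqrt_mul zero_le_two, sq_abs]
  exact sqrt_le_sqrt (by nlinarith [sq_nonneg (1 - x)])

theorem stmt4_general (d : ℕ) (Λ : Matrix (Fin d) (Fin d) ℝ)
    (hpd : Λ.PosDef)
    (Q : (Fin d → ℝ) → ℝ)
    (hQ : ∀ x, Q x = dotProduct x (Λ.mulVec x))
    (ψ : (Fin d → ℤ) → ℝ)
    (hψ : ∀ n : Fin d → ℤ, ψ n = Real.exp (-Q (fun i => (n i : ℝ)) / 2) /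
        Real.sqrt (∑' m : Fin d → ℤ, Real.exp (-Q (fun i => (m i : ℝ)))))
    (k : Fin d) (ε : ℤ) (hε : ε = 2 ∨ ε = -2)
    (c : Fin d → ℤ) (hc : c = fun i => if i = k then ε else 0) :
    Real.sqrt (1 - |∑' n : Fin d → ℤ, ψ n * ψ (n + c)| ^ 2) ≤
      Real.sqrt 2 * Real.sqrt (1 - Real.exp (-(Λ k k))) := by
  set φ := (Int.castAddHom ℝ).compLeft (Fin d)
  set q : (Fin d → ℤ) → ℝ := fun n => Q (φ n)
  have hψq : ψ = normalizedGaussian q := funext hψ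
  have hq : ∀ x y, q (x + y) + q (x - y) = 2 * q x + 2 * q y := fun x y => by
    simpa only [q, hQ, map_add, map_sub] using parallelogram_law_dotProduct_mulVec Λ (φ x) (φ y)
  have hs : Summable fun n => exp (-q n) := by
    simp only [q, hQ]
    exact hpd.summable_exp_neg_dotProduct_mulVec
  obtain ⟨σ, hσ, rfl⟩ : ∃ σ : ℤ, (σ : ℝ) ^ 2 = 1 ∧ ε = σ + σ := by
    rcases hε with rfl | rfl
    exacts [⟨1, by norm_num, rfl⟩, ⟨-1, by norm_num, rfl⟩]
  have hcb : c = Pi.single k σ + Pi.single k σ := by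
    subst hc
    ext i
    by_cases hi : i = k <;> simp [hi]
  have hqb : q (Pi.single k σ) = Λ k k := by
    have hφ : φ (Pi.single k σ) = Pi.single k (σ : ℝ) := by
      ext i
      by_cases hi : i = k <;> simp [φ, hi]
    simp only [q, hQ, hφ, single_dotProduct_mulVec_single, hσ, one_mul]
  rw [hψq, hcb, tsum_normalizedGaussian_mul_add_add hq hs, hqb]
  exact sqrt_one_sub_sq_abs_le _

/-- Two-dimensional-shearing-error bound for a normalized discrete Gaussian on `ℤ^d`:
for a shift by `±2` along a single coordinate `k`, the trace distance between the Gaussian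
and its shift is at most `√2 · (1 - exp(-Λ_{kk}))^{1/2}`. -/
theorem stmt4 (d : ℕ) (hd : 1 ≤ d) (Λ : Matrix (Fin d) (Fin d) ℝ)
    (hsymm : Λ.IsSymm) (hpd : Λ.PosDef)
    (Q : (Fin d → ℝ) → ℝ)
    (hQ : ∀ x, Q x = dotProduct x (Λ.mulVec x))
    (ψ : (Fin d → ℤ) → ℝ)
    (hψ : ∀ n : Fin d → ℤ, ψ n = Real.exp (-Q (fun i => (n i : ℝ)) / 2) /
        Real.sqrt (∑' m : Fin d → ℤ, Real.exp (-Q (fun i => (m i : ℝ)))))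
    (k : Fin d) (ε : ℤ) (hε : ε = 2 ∨ ε = -2)
    (c : Fin d → ℤ) (hc : c = fun i => if i = k then ε else 0) :
    Real.sqrt (1 - |∑' n : Fin d → ℤ, ψ n * ψ (n + c)| ^ 2) ≤
      Real.sqrt 2 * Real.sqrt (1 - Real.exp (-(Λ k k))) :=
  stmt4_general d Λ hpd Q hQ ψ hψ k ε hε c hc
end

section
/- For every integer n ≥ 1, the sum λ_ν = ∑ 1/‖ν‖₂² over all nonzero ν ∈ ℤ³ with ‖ν‖_∞ ≤ 2^n − 1 satisfies λ_ν ≥ (1/3)·( 7·2^{n+1} − 9n − 11 − 3·2^{−n} ). Consequently r_ν := (4/λ_ν)·( 7·2^{n+1} − 9n − 11 − 3·2^{−n} ) ≤ 12. -/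
/-!
Every nonzero `ν` in the box `‖ν‖_∞ ≤ M` of `ℤ^d` has `‖ν‖₂² ≤ d M²`, so it contributes at least
`1/(d M²)` to `λ`. Going from `M = 2ⁿ - 1` to `M' = 2ⁿ⁺¹ - 1` adds the shell of
`(4x - 1)³ - (2x - 1)³` points (`x = 2ⁿ`), each contributing at least `1/(3(2x - 1)²)`, and this
exceeds the increment `(14x - 9 + 3/(2x))/3` of the claimed lower bound. Since the box with `M = 0`
has no nonzero point, induction on `n` gives the bound on `λ`, and `r_ν ≤ 12` is a rearrangement
(if `λ = 0`, then `4/λ = 0` in Lean).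
-/

open Finset

section Box

variable {ι : Type*} [Fintype ι] [DecidableEq ι]

noncomputable def puncturedBox (ι : Type*) [Fintype ι] [DecidableEq ι] (M : ℤ) : Finset (ι → ℤ) :=
  (Icc (fun _ => -M) (fun _ => M)).erase 0

noncomputable def invNormSqSum (ι : Type*) [Fintype ι] [DecidableEq ι] (M : ℤ) : ℝ :=
  ∑ ν ∈ puncturedBox ι M, (∑ i, (ν i : ℝ) ^ 2)⁻¹

theorem card_Icc_neg_const (M : ℤ) (hM : 0 ≤ M) :
    (#(Icc (fun _ : ι => -M) (fun _ => M)) : ℤ) = (2 * M + 1) ^ Fintype.card ι := by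
  rw [Pi.card_Icc]
  simp only [Int.card_Icc, prod_const, card_univ]
  push_cast
  rw [Int.toNat_of_nonneg (by omega)]
  ring

theorem cast_card_puncturedBox (M : ℤ) (hM : 0 ≤ M) :
    (#(puncturedBox ι M) : ℝ) = (2 * M + 1) ^ Fintype.card ι - 1 := by
  have hzero : (0 : ι → ℤ) ∈ Icc (fun _ => -M) (fun _ => M) :=
    mem_Icc.mpr ⟨fun _ => neg_nonpos.mpr hM, fun _ => hM⟩
  have hcard : ((#(Icc (fun _ : ι => -M) (fun _ => M)) : ℤ) : ℝ)
      = ((2 * M + 1) ^ Fintype.card ι : ℤ) := congrArg _ (card_Icc_neg_const M hM)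
  push_cast at hcard
  rw [puncturedBox, cast_card_erase_of_mem hzero, hcard]

theorem puncturedBox_zero : puncturedBox ι 0 = ∅ := by
  simp [puncturedBox, ← Pi.zero_def]

theorem puncturedBox_mono {M M' : ℤ} (h : M ≤ M') : puncturedBox ι M ⊆ puncturedBox ι M' :=
  erase_subset_erase _ <| Icc_subset_Icc (fun _ => neg_le_neg h) (fun _ => h)

omit [DecidableEq ι] in
theorem sum_sq_pos_of_ne_zero {ν : ι → ℤ} (hν : ν ≠ 0) :
    0 < ∑ i, (ν i : ℝ) ^ 2 := by
  obtain ⟨i, hi⟩ := Function.ne_iff.mp hν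
  have hi' : (ν i : ℝ) ≠ 0 := by exact_mod_cast hi
  calc (0 : ℝ) < (ν i : ℝ) ^ 2 := by positivity
    _ ≤ ∑ j, (ν j : ℝ) ^ 2 := single_le_sum (f := fun j => (ν j : ℝ) ^ 2)
          (fun j _ => sq_nonneg _) (mem_univ i)

theorem sum_sq_le_of_mem_Icc {M : ℤ} {ν : ι → ℤ}
    (hν : ν ∈ Icc (fun _ => -M) (fun _ => M)) :
    ∑ i, (ν i : ℝ) ^ 2 ≤ Fintype.card ι * (M : ℝ) ^ 2 := by
  obtain ⟨hlo, hhi⟩ := mem_Icc.mp hν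
  calc ∑ i, (ν i : ℝ) ^ 2 ≤ ∑ _i : ι, (M : ℝ) ^ 2 :=
        sum_le_sum fun i _ => sq_le_sq' (by exact_mod_cast hlo i) (by exact_mod_cast hhi i)
    _ = Fintype.card ι * (M : ℝ) ^ 2 := by simp

theorem inv_le_inv_sum_sq_of_mem_puncturedBox {M : ℤ} {ν : ι → ℤ} (hν : ν ∈ puncturedBox ι M) :
    (Fintype.card ι * (M : ℝ) ^ 2)⁻¹ ≤ (∑ i, (ν i : ℝ) ^ 2)⁻¹ :=
  inv_anti₀ (sum_sq_pos_of_ne_zero (ne_of_mem_erase hν))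
    (sum_sq_le_of_mem_Icc (mem_of_mem_erase hν))

theorem invNormSqSum_nonneg (M : ℤ) : 0 ≤ invNormSqSum ι M :=
  sum_nonneg fun _ _ => by positivity

theorem invNormSqSum_add_shell_le {M M' : ℤ} (hM : 0 ≤ M) (h : M ≤ M') :
    invNormSqSum ι M + ((2 * M' + 1) ^ Fintype.card ι - (2 * M + 1) ^ Fintype.card ι)
        / (Fintype.card ι * (M' : ℝ) ^ 2) ≤ invNormSqSum ι M' := by
  have hsub := puncturedBox_mono (ι := ι) h
  have hshell : (#(puncturedBox ι M' \ puncturedBox ι M) : ℝ)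
      = (2 * M' + 1) ^ Fintype.card ι - (2 * M + 1) ^ Fintype.card ι := by
    rw [cast_card_sdiff hsub, cast_card_puncturedBox M' (hM.trans h), cast_card_puncturedBox M hM]
    ring
  have hbound := card_nsmul_le_sum (puncturedBox ι M' \ puncturedBox ι M)
    (fun ν => (∑ i, (ν i : ℝ) ^ 2)⁻¹) _ fun ν hν =>
    inv_le_inv_sum_sq_of_mem_puncturedBox (M := M') (mem_sdiff.mp hν).1
  rw [nsmul_eq_mul, hshell, ← div_eq_mul_inv] at hbound
  rw [invNormSqSum, invNormSqSum, ← sum_sdiff hsub]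
  linarith

end Box

theorem shell_increment_le (x : ℝ) (hx : 1 ≤ x) :
    (1 / 3) * (14 * x - 9 + 3 / (2 * x))
      ≤ ((4 * x - 1) ^ 3 - (2 * x - 1) ^ 3) / (3 * (2 * x - 1) ^ 2) := by
  have h2x : 0 < 2 * x - 1 := by linarith
  have hlhs : (1 / 3) * (14 * x - 9 + 3 / (2 * x)) = ((14 * x - 9) * (2 * x) + 3) / (6 * x) := by
    field_simp
    ring
  rw [hlhs, div_le_div_iff₀ (by positivity) (by positivity)]
  -- the gap is `3 (112x³ - 100x² + 30x - 3)`
  nlinarith [mul_pos (by positivity : (0 : ℝ) < x) h2x]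

theorem le_invNormSqSum_two_pow_sub_one (n : ℕ) :
    (1 / 3) * (7 * (2 : ℝ) ^ (n + 1) - 9 * (n : ℝ) - 11 - 3 / (2 : ℝ) ^ n)
      ≤ invNormSqSum (Fin 3) (2 ^ n - 1) := by
  induction n with
  | zero => norm_num [invNormSqSum, puncturedBox_zero]
  | succ k ih =>
    have hpow : (1 : ℤ) ≤ 2 ^ k := one_le_pow₀ (by norm_num)
    have hshell := invNormSqSum_add_shell_le (ι := Fin 3) (M := 2 ^ k - 1) (M' := 2 ^ (k + 1) - 1)
      (by omega) (by rw [pow_succ]; omega)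
    have hincr := shell_increment_le (2 ^ k) (one_le_pow₀ (by norm_num))
    have hgain : ((2 * ((2 ^ (k + 1) - 1 : ℤ) : ℝ) + 1) ^ Fintype.card (Fin 3)
          - (2 * ((2 ^ k - 1 : ℤ) : ℝ) + 1) ^ Fintype.card (Fin 3))
          / (Fintype.card (Fin 3) * ((2 ^ (k + 1) - 1 : ℤ) : ℝ) ^ 2)
        = ((4 * 2 ^ k - 1) ^ 3 - (2 * 2 ^ k - 1) ^ 3) / (3 * (2 * 2 ^ k - 1) ^ 2) := by
      push_cast [Fintype.card_fin, pow_succ]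
      ring
    have hbound_succ :
        (1 / 3) * (7 * (2 : ℝ) ^ (k + 1 + 1) - 9 * ((k + 1 : ℕ) : ℝ) - 11 - 3 / (2 : ℝ) ^ (k + 1))
          = (1 / 3) * (7 * (2 : ℝ) ^ (k + 1) - 9 * (k : ℝ) - 11 - 3 / (2 : ℝ) ^ k)
            + (1 / 3) * (14 * 2 ^ k - 9 + 3 / (2 * 2 ^ k)) := by
      push_cast [pow_succ]
      field_simp
      ring
    linarith

theorem stmt6_general (n : ℕ)
    (S : Finset (Fin 3 → ℤ))
    (hS : S = (Finset.Icc (fun _ => -(2 ^ n - 1) : Fin 3 → ℤ)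
        (fun _ => 2 ^ n - 1 : Fin 3 → ℤ)).erase 0)
    (lam : ℝ)
    (hlam : lam = ∑ ν ∈ S, (∑ i, ((ν i : ℝ)) ^ 2)⁻¹) :
    (1 / 3) * (7 * (2 : ℝ) ^ (n + 1) - 9 * (n : ℝ) - 11 - 3 / (2 : ℝ) ^ n) ≤ lam ∧
    (4 / lam) * (7 * (2 : ℝ) ^ (n + 1) - 9 * (n : ℝ) - 11 - 3 / (2 : ℝ) ^ n) ≤ 12 := by
  have hlam' : lam = invNormSqSum (Fin 3) (2 ^ n - 1) := by rw [hlam, hS]; rfl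
  have hlower := le_invNormSqSum_two_pow_sub_one n
  rw [← hlam'] at hlower
  refine ⟨hlower, ?_⟩
  have hratio := div_le_of_le_mul₀ (hlam' ▸ invNormSqSum_nonneg _) (by norm_num : (0 : ℝ) ≤ 3)
    (a := 7 * (2 : ℝ) ^ (n + 1) - 9 * (n : ℝ) - 11 - 3 / (2 : ℝ) ^ n) (by linarith)
  rw [div_mul_eq_mul_div, mul_div_assoc]
  linarith

/-- Lower bound on the momentum-state normalization constant
`λ_ν = ∑_{0 ≠ ν ∈ ℤ³, ‖ν‖_∞ ≤ 2ⁿ - 1} 1/‖ν‖₂²`, and the resulting bound `r_ν ≤ 12`. -/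
theorem stmt6 (n : ℕ) (hn : 1 ≤ n)
    (S : Finset (Fin 3 → ℤ))
    (hS : S = (Finset.Icc (fun _ => -(2 ^ n - 1) : Fin 3 → ℤ)
        (fun _ => 2 ^ n - 1 : Fin 3 → ℤ)).erase 0)
    (lam : ℝ)
    (hlam : lam = ∑ ν ∈ S, (∑ i, ((ν i : ℝ)) ^ 2)⁻¹) :
    (1 / 3) * (7 * (2 : ℝ) ^ (n + 1) - 9 * (n : ℝ) - 11 - 3 / (2 : ℝ) ^ n) ≤ lam ∧
    (4 / lam) * (7 * (2 : ℝ) ^ (n + 1) - 9 * (n : ℝ) - 11 - 3 / (2 : ℝ) ^ n) ≤ 12 :=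
  stmt6_general n S hS lam hlam
end

section
/- Let 𝓗 be a complex Hilbert space and ψ₀ ∈ 𝓗 a unit vector. Let U_init, U_prop, U_B, Ũ_init, Ũ_prop, Ũ_B be unitary operators on 𝓗 with ‖(U_init − Ũ_init) ψ₀‖ ≤ ε_init, ‖U_prop − Ũ_prop‖ ≤ ε_prop and ‖U_B − Ũ_B‖ ≤ ε_B, and set Ψ = U_B U_prop U_init ψ₀ and Ψ̃ = Ũ_B Ũ_prop Ũ_init ψ₀. Let O and Õ be bounded self-adjoint operators on 𝓗 with ‖O‖ ≤ λ_O, ‖Õ‖ ≤ λ_O (λ_O > 0) and ‖O − Õ‖ ≤ ε_O. If θ_est ∈ ℝ satisfies |θ_est − arccos( ⟨Ψ̃, Õ Ψ̃⟩ / λ_O )| ≤ ε_QAE / λ_O, then | λ_O · cos θ_est − ⟨Ψ, O Ψ⟩ | ≤ 2 λ_O ( ε_init + ε_prop + ε_B ) + ε_O + ε_QAE. -/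
/-!
Since the implemented unitaries are isometries, telescoping gives
`‖Ψ - Ψ̃‖ ≤ ε_init + ε_prop + ε_B`, and for unit vectors the expectation value moves by at most
`‖O - Õ‖ + 2‖O‖‖Ψ - Ψ̃‖`. As `cos` is 1-Lipschitz, an angle error of `ε_QAE / λ_O` costs at most
`ε_QAE` after rescaling by `λ_O`; the only remaining point is that `⟪Ψ, O Ψ⟫` is real.
-/

open scoped InnerProductSpace

section Perturbation

variable {𝕜 E F : Type*} [RCLike 𝕜]

theorem ContinuousLinearMap.norm_apply_sub_apply_le [SeminormedAddCommGroup E]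
    [SeminormedAddCommGroup F] [NormedSpace 𝕜 E] [NormedSpace 𝕜 F] {U V : E →L[𝕜] F}
    (hU : ∀ z, ‖U z‖ = ‖z‖) (x y : E) : ‖U x - V y‖ ≤ ‖x - y‖ + ‖U - V‖ * ‖y‖ := by
  have hsplit : U x - V y = U (x - y) + (U - V) y := by
    simp only [map_sub, sub_apply]; abel
  calc ‖U x - V y‖ ≤ ‖U (x - y)‖ + ‖(U - V) y‖ := hsplit ▸ norm_add_le _ _
    _ ≤ ‖x - y‖ + ‖U - V‖ * ‖y‖ := by rw [hU]; gcongr; exact (U - V).le_opNorm y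

variable [NormedAddCommGroup E] [InnerProductSpace 𝕜 E]

theorem ContinuousLinearMap.norm_inner_apply_le (A : E →L[𝕜] E) (x y : E) :
    ‖⟪x, A y⟫_𝕜‖ ≤ ‖A‖ * ‖x‖ * ‖y‖ :=
  calc ‖⟪x, A y⟫_𝕜‖ ≤ ‖x‖ * ‖A y‖ := norm_inner_le_norm _ _
    _ ≤ ‖x‖ * (‖A‖ * ‖y‖) := by gcongr; exact A.le_opNorm y
    _ = ‖A‖ * ‖x‖ * ‖y‖ := by ring

theorem ContinuousLinearMap.norm_inner_apply_self_sub_le (A B : E →L[𝕜] E) {x y : E}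
    (hx : ‖x‖ ≤ 1) (hy : ‖y‖ ≤ 1) :
    ‖⟪x, A x⟫_𝕜 - ⟪y, B y⟫_𝕜‖ ≤ ‖A - B‖ + 2 * ‖A‖ * ‖x - y‖ := by
  have hsplit : ⟪x, A x⟫_𝕜 - ⟪y, B y⟫_𝕜 =
      ⟪y, (A - B) y⟫_𝕜 + ⟪x - y, A y⟫_𝕜 + ⟪x, A (x - y)⟫_𝕜 := by
    simp only [sub_apply, map_sub, inner_sub_left, inner_sub_right]
    ring
  rw [hsplit]
  calc _ ≤ ‖⟪y, (A - B) y⟫_𝕜‖ + ‖⟪x - y, A y⟫_𝕜‖ + ‖⟪x, A (x - y)⟫_𝕜‖ := norm_add₃_le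
    _ ≤ ‖A - B‖ * ‖y‖ * ‖y‖ + ‖A‖ * ‖x - y‖ * ‖y‖ + ‖A‖ * ‖x‖ * ‖x - y‖ := by
        gcongr <;> apply ContinuousLinearMap.norm_inner_apply_le
    _ ≤ ‖A - B‖ * 1 * 1 + ‖A‖ * ‖x - y‖ * 1 + ‖A‖ * 1 * ‖x - y‖ := by gcongr
    _ = ‖A - B‖ + 2 * ‖A‖ * ‖x - y‖ := by ring

end Perturbation

theorem abs_mul_cos_sub_le_of_abs_sub_arccos_le {lam c θ ε : ℝ} (hlam : 0 < lam)
    (hc : |c| ≤ lam) (hθ : |θ - Real.arccos (c / lam)| ≤ ε / lam) :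
    |lam * Real.cos θ - c| ≤ ε := by
  have hcos : Real.cos (Real.arccos (c / lam)) = c / lam := by
    rw [abs_le] at hc
    apply Real.cos_arccos
    · rw [le_div_iff₀ hlam]; linarith
    · rw [div_le_iff₀ hlam]; linarith
  calc |lam * Real.cos θ - c| = lam * |Real.cos θ - Real.cos (Real.arccos (c / lam))| := by
        rw [hcos, ← abs_of_pos hlam, ← abs_mul, abs_of_pos hlam, mul_sub,
          mul_div_cancel₀ _ hlam.ne']
    _ ≤ lam * (ε / lam) := by gcongr; exact (Real.abs_cos_sub_cos_le _ _).trans hθ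
    _ = ε := mul_div_cancel₀ _ hlam.ne'

theorem Complex.norm_ofReal_sub_le_of_ofReal_re_eq {z : ℂ} (hz : (z.re : ℂ) = z)
    (r : ℝ) (w : ℂ) :
    ‖(r : ℂ) - z‖ ≤ |r - w.re| + ‖z - w‖ := by
  conv_lhs => rw [← hz, ← ofReal_sub, norm_real, Real.norm_eq_abs]
  calc |r - z.re| ≤ |r - w.re| + |w.re - z.re| := abs_sub_le _ _ _
    _ ≤ |r - w.re| + ‖z - w‖ := by
        gcongr; rw [abs_sub_comm, ← sub_re]; exact abs_re_le_norm _

theorem stmt14_general {H : Type*} [NormedAddCommGroup H] [InnerProductSpace ℂ H] [CompleteSpace H]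
    (ψ₀ : H) (hψ₀ : ‖ψ₀‖ = 1)
    (Uinit Uprop UB Utinit Utprop UtB : H →L[ℂ] H)
    (hUinit : Uinit ∈ unitary (H →L[ℂ] H)) (hUprop : Uprop ∈ unitary (H →L[ℂ] H))
    (hUB : UB ∈ unitary (H →L[ℂ] H))
    (hUtinit : Utinit ∈ unitary (H →L[ℂ] H)) (hUtprop : Utprop ∈ unitary (H →L[ℂ] H))
    (hUtB : UtB ∈ unitary (H →L[ℂ] H))
    (εinit εprop εB : ℝ)
    (hinit : ‖(Uinit - Utinit) ψ₀‖ ≤ εinit)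
    (hprop : ‖Uprop - Utprop‖ ≤ εprop)
    (hB : ‖UB - UtB‖ ≤ εB)
    (Ψ Ψt : H)
    (hΨ : Ψ = UB (Uprop (Uinit ψ₀))) (hΨt : Ψt = UtB (Utprop (Utinit ψ₀)))
    (O Ot : H →L[ℂ] H) (hOsa : IsSelfAdjoint O)
    (lamO : ℝ) (hlam : 0 < lamO) (hO : ‖O‖ ≤ lamO) (hOt : ‖Ot‖ ≤ lamO)
    (εO : ℝ) (hOOt : ‖O - Ot‖ ≤ εO)
    (θest εQAE : ℝ)
    (hest : |θest - Real.arccos ((⟪Ψt, Ot Ψt⟫_ℂ).re / lamO)| ≤ εQAE / lamO) :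
    ‖((lamO * Real.cos θest : ℝ) : ℂ) - ⟪Ψ, O Ψ⟫_ℂ‖ ≤
      2 * lamO * (εinit + εprop + εB) + εO + εQAE := by
  have hΨt₁ : ‖Utinit ψ₀‖ = 1 := by rw [Utinit.norm_map_of_mem_unitary hUtinit, hψ₀]
  have hΨt₂ : ‖Utprop (Utinit ψ₀)‖ = 1 := by rw [Utprop.norm_map_of_mem_unitary hUtprop, hΨt₁]
  have hΨtnorm : ‖Ψt‖ = 1 := by rw [hΨt, UtB.norm_map_of_mem_unitary hUtB, hΨt₂]
  have hΨnorm : ‖Ψ‖ = 1 := by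
    rw [hΨ, UB.norm_map_of_mem_unitary hUB, Uprop.norm_map_of_mem_unitary hUprop,
      Uinit.norm_map_of_mem_unitary hUinit, hψ₀]
  have hstate : ‖Ψ - Ψt‖ ≤ εinit + εprop + εB := by
    have h₂ := ContinuousLinearMap.norm_apply_sub_apply_le
      (V := Utprop) (Uprop.norm_map_of_mem_unitary hUprop) (Uinit ψ₀) (Utinit ψ₀)
    have h₃ := ContinuousLinearMap.norm_apply_sub_apply_le
      (V := UtB) (UB.norm_map_of_mem_unitary hUB) (Uprop (Uinit ψ₀)) (Utprop (Utinit ψ₀))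
    rw [hΨt₁, mul_one] at h₂
    rw [hΨt₂, mul_one] at h₃
    rw [sub_apply] at hinit
    rw [hΨ, hΨt]
    linarith
  have hexpect : ‖⟪Ψ, O Ψ⟫_ℂ - ⟪Ψt, Ot Ψt⟫_ℂ‖ ≤ 2 * lamO * (εinit + εprop + εB) + εO := by
    refine (O.norm_inner_apply_self_sub_le Ot hΨnorm.le hΨtnorm.le).trans ?_
    have := mul_le_mul hO hstate (norm_nonneg _) hlam.le
    linarith
  have hqae : |lamO * Real.cos θest - (⟪Ψt, Ot Ψt⟫_ℂ).re| ≤ εQAE := by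
    refine abs_mul_cos_sub_le_of_abs_sub_arccos_le hlam ?_ hest
    calc |(⟪Ψt, Ot Ψt⟫_ℂ).re| ≤ ‖Ot‖ * ‖Ψt‖ * ‖Ψt‖ :=
          (Complex.abs_re_le_norm _).trans (Ot.norm_inner_apply_le _ _)
      _ ≤ lamO := by rw [hΨtnorm, mul_one, mul_one]; exact hOt
  calc _ ≤ |lamO * Real.cos θest - (⟪Ψt, Ot Ψt⟫_ℂ).re| + ‖⟪Ψ, O Ψ⟫_ℂ - ⟪Ψt, Ot Ψt⟫_ℂ‖ :=
        Complex.norm_ofReal_sub_le_of_ofReal_re_eq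
          (hOsa.isSymmetric.coe_re_inner_self_apply Ψ) _ _
    _ ≤ 2 * lamO * (εinit + εprop + εB) + εO + εQAE := by linarith

/-- End-to-end error bound for estimating an observable expectation value: combining
initial-state-preparation, propagation, basis-change, block-encoding, and
amplitude-estimation errors gives
`|λ_O cos θ_est - ⟨Ψ, OΨ⟩| ≤ 2λ_O(ε_init + ε_prop + ε_B) + ε_O + ε_QAE`. -/
theorem stmt14 {H : Type*} [NormedAddCommGroup H] [InnerProductSpace ℂ H] [CompleteSpace H]
    (ψ₀ : H) (hψ₀ : ‖ψ₀‖ = 1)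
    (Uinit Uprop UB Utinit Utprop UtB : H →L[ℂ] H)
    (hUinit : Uinit ∈ unitary (H →L[ℂ] H)) (hUprop : Uprop ∈ unitary (H →L[ℂ] H))
    (hUB : UB ∈ unitary (H →L[ℂ] H))
    (hUtinit : Utinit ∈ unitary (H →L[ℂ] H)) (hUtprop : Utprop ∈ unitary (H →L[ℂ] H))
    (hUtB : UtB ∈ unitary (H →L[ℂ] H))
    (εinit εprop εB : ℝ)
    (hinit : ‖(Uinit - Utinit) ψ₀‖ ≤ εinit)
    (hprop : ‖Uprop - Utprop‖ ≤ εprop)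
    (hB : ‖UB - UtB‖ ≤ εB)
    (Ψ Ψt : H)
    (hΨ : Ψ = UB (Uprop (Uinit ψ₀))) (hΨt : Ψt = UtB (Utprop (Utinit ψ₀)))
    (O Ot : H →L[ℂ] H) (hOsa : IsSelfAdjoint O) (hOtsa : IsSelfAdjoint Ot)
    (lamO : ℝ) (hlam : 0 < lamO) (hO : ‖O‖ ≤ lamO) (hOt : ‖Ot‖ ≤ lamO)
    (εO : ℝ) (hOOt : ‖O - Ot‖ ≤ εO)
    (θest εQAE : ℝ)
    (hest : |θest - Real.arccos ((⟪Ψt, Ot Ψt⟫_ℂ).re / lamO)| ≤ εQAE / lamO) :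
    ‖((lamO * Real.cos θest : ℝ) : ℂ) - ⟪Ψ, O Ψ⟫_ℂ‖ ≤
      2 * lamO * (εinit + εprop + εB) + εO + εQAE :=
  stmt14_general ψ₀ hψ₀ Uinit Uprop UB Utinit Utprop UtB hUinit hUprop hUB hUtinit hUtprop hUtB
    εinit εprop εB hinit hprop hB Ψ Ψt hΨ hΨt O Ot hOsa lamO hlam hO hOt εO hOOt θest εQAE hest
end

section
/- Let φ ∈ [−π/2, π/2], and set t = tan(φ/2), s = sin φ and c = cos φ. Let M be the 2×2 real matrix M = [[1, 0], [−s, 1]] · [[1, t], [0, 1]]. Then the largest eigenvalue of MᵀM equals 1 + ( t² + √( (2 + t²)² − 4(c + s t)² ) )/2, and it is at most 1 + (1 + √5)/2; hence ‖M‖₂ < 1.619. -/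
open Matrix

/-!
With `t = tan (φ / 2)` the tangent half-angle formulas give `s t = 1 - c`, i.e. `c + s t = 1`.
Both shears are unimodular, so `MᵀM` has determinant `1`, and its trace is the sum of the squares
of the entries of `M = [[1, t], [-s, c]]`, namely `2 + t²`. The eigenvalues of `MᵀM` are thus
the roots of `λ² - (2 + t²) λ + 1`. Since `c ≥ 0` on `[-π/2, π/2]`, the half-angle formula for
the cosine forces `t² ≤ 1`, so the larger root is at most `1 + (1 + √5) / 2`, the square of the
golden ratio `≈ 1.618`.
-/

lemma ciSup_fin_two {α : Type*} [ConditionallyCompleteLinearOrder α] (f : Fin 2 → α) :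
    ⨆ i, f i = max (f 0) (f 1) := by
  rw [iSup, ← csSup_pair]
  congr
  ext
  simp [Fin.exists_fin_two, eq_comm]

lemma max_eq_of_add_eq_of_mul_eq {a b T D : ℝ} (hT : a + b = T) (hD : a * b = D) :
    max a b = (T + √(T ^ 2 - 4 * D)) / 2 := by
  have hdiscrim : T ^ 2 - 4 * D = (a - b) ^ 2 := by subst hT hD; ring
  rw [hdiscrim, Real.sqrt_sq_eq_abs, ← hT]
  rcases le_total a b with hab | hab
  · rw [max_eq_right hab, abs_of_nonpos (sub_nonpos.2 hab)]; ring
  · rw [max_eq_left hab, abs_of_nonneg (sub_nonneg.2 hab)]; ring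

theorem Matrix.IsHermitian.iSup_eigenvalues_fin_two {A : Matrix (Fin 2) (Fin 2) ℝ}
    (hA : A.IsHermitian) :
    ⨆ i, hA.eigenvalues i = (A.trace + √(A.trace ^ 2 - 4 * A.det)) / 2 := by
  rw [ciSup_fin_two]
  apply max_eq_of_add_eq_of_mul_eq
  · simpa [Fin.sum_univ_two] using hA.trace_eq_sum_eigenvalues.symm
  · simpa [Fin.prod_univ_two] using hA.det_eq_prod_eigenvalues.symm

lemma Matrix.trace_transpose_mul_self_fin_two (a b c d : ℝ) :
    (!![a, b; c, d]ᵀ * !![a, b; c, d]).trace = a ^ 2 + b ^ 2 + c ^ 2 + d ^ 2 := by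
  simp only [trace_fin_two, mul_apply, Fin.sum_univ_two, transpose_apply, of_apply, cons_val',
    cons_val_zero, cons_val_one, cons_val_fin_one]
  ring

lemma shear_mul_shear (s t : ℝ) :
    !![1, 0; -s, 1] * !![1, t; 0, 1] = !![1, t; -s, 1 - s * t] := by
  rw [mul_fin_two]
  ring_nf

lemma det_shear_mul_shear (s t : ℝ) : (!![1, 0; -s, 1] * !![1, t; 0, 1]).det = 1 := by
  rw [det_mul, det_fin_two_of, det_fin_two_of]
  ring

lemma Real.cos_add_sin_mul_tan_half {x : ℝ} (hx : cos x ≠ -1) :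
    cos x + sin x * tan (x / 2) = 1 := by
  rw [cos_eq_two_mul_tan_half_div_one_sub_tan_half_sq x hx,
    sin_eq_two_mul_tan_half_div_one_add_tan_half_sq x]
  field_simp
  ring

lemma Real.tan_half_sq_le_one {x : ℝ} (hx : 0 ≤ cos x) : tan (x / 2) ^ 2 ≤ 1 := by
  rwa [cos_eq_two_mul_tan_half_div_one_sub_tan_half_sq x (by linarith),
    le_div_iff₀ (by positivity), zero_mul, sub_nonneg] at hx

lemma sqrt_one_add_goldenRatio_lt : √(1 + (1 + √5) / 2) < 1.619 := by
  have hsqrt5 : √5 < 2.2361 := (Real.sqrt_lt' (by norm_num)).2 (by norm_num)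
  exact (Real.sqrt_lt' (by norm_num)).2 (by linarith)

/-- Spectral norm of the shear product `M = S₂(φ)·S₁(φ)` for `φ ∈ [-π/2, π/2]`: the largest
eigenvalue of `MᵀM` is `1 + (t² + √((2+t²)² - 4(c+st)²))/2 ≤ 1 + (1+√5)/2`,
hence `‖M‖₂ < 1.619`. -/
theorem stmt16 (φ : ℝ) (hφ : φ ∈ Set.Icc (-(Real.pi / 2)) (Real.pi / 2))
    (t s c : ℝ) (ht : t = Real.tan (φ / 2)) (hs : s = Real.sin φ) (hc : c = Real.cos φ)
    (M : Matrix (Fin 2) (Fin 2) ℝ) (hM : M = !![1, 0; -s, 1] * !![1, t; 0, 1])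
    (h : (Mᵀ * M).IsHermitian) :
    (⨆ i, h.eigenvalues i) =
        1 + (t ^ 2 + Real.sqrt ((2 + t ^ 2) ^ 2 - 4 * (c + s * t) ^ 2)) / 2 ∧
    (⨆ i, h.eigenvalues i) ≤ 1 + (1 + Real.sqrt 5) / 2 ∧
    Real.sqrt (⨆ i, h.eigenvalues i) < 1.619 := by
  have hc0 : 0 ≤ c := hc ▸ Real.cos_nonneg_of_mem_Icc hφ
  have hcst : c + s * t = 1 := by
    subst hc hs ht
    exact Real.cos_add_sin_mul_tan_half (by linarith)
  have ht1 : t ^ 2 ≤ 1 := ht ▸ Real.tan_half_sq_le_one (hc ▸ hc0)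
  have hpyth : s ^ 2 + c ^ 2 = 1 := by rw [hs, hc]; exact Real.sin_sq_add_cos_sq φ
  have htrace : (Mᵀ * M).trace = 2 + t ^ 2 := by
    rw [hM, shear_mul_shear, trace_transpose_mul_self_fin_two, show 1 - s * t = c by linarith]
    linarith
  have hdet : (Mᵀ * M).det = 1 := by
    rw [det_mul, det_transpose, hM, det_shear_mul_shear, one_mul]
  have hsup : ⨆ i, h.eigenvalues i = 1 + (t ^ 2 + √((2 + t ^ 2) ^ 2 - 4)) / 2 := by
    rw [h.iSup_eigenvalues_fin_two, htrace, hdet, mul_one]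
    ring
  have hle : ⨆ i, h.eigenvalues i ≤ 1 + (1 + √5) / 2 := by
    rw [hsup]
    gcongr
    nlinarith
  refine ⟨by rw [hsup, hcst]; norm_num, hle, ?_⟩
  exact (Real.sqrt_le_sqrt hle).trans_lt sqrt_one_add_goldenRatio_lt
end
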